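/- arXiv:2507.00091 — 3 statements merged into one kernel-verified Lean document; each statement's English description precedes it below -/
import Mathlib

section
/- Let N, d be positive integers and let ℓ : Fin N → ℝ≥0 (total bits sent by each node) and m : Fin N → ℕ (cache sizes) satisfy: for every i, the sum of ℓ(k) over the 2d+1 indices k ∈ {i−d, ..., i+d} (indices mod N) is at least N − m(i), and the sum of m(i) over all i equals r·N. Then the total sum of ℓ over all nodes is at least N(N − r)/(2d). -/
/-- Converse double-counting for all-gather: if every node `i` must receive
`N − m i` units from the transmissions of nodes within distance `d` (excluding
itself) and the total cache size is `r·N`, then the total load is at least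
`N(N−r)/(2d)`. -/
theorem allgather_converse_counting (N d r : ℕ) [NeZero N] (hd : 0 < d)
    (ℓ : ZMod N → ℝ) (hℓ : ∀ i, 0 ≤ ℓ i) (m : ZMod N → ℕ)
    (h1 : ∀ i : ZMod N,
      (N : ℝ) - m i ≤ ∑ j ∈ (Finset.Icc (-(d : ℤ)) (d : ℤ)).erase 0, ℓ (i + (j : ZMod N)))
    (h2 : ∑ i : ZMod N, (m i : ℝ) = r * N) :
    (N : ℝ) * ((N : ℝ) - r) / (2 * d) ≤ ∑ i : ZMod N, ℓ i := by
  have hsum : ∑ i : ZMod N, ((N : ℝ) - m i) ≤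
      ∑ i : ZMod N, ∑ j ∈ (Finset.Icc (-(d : ℤ)) (d : ℤ)).erase 0, ℓ (i + (j : ZMod N)) :=
    Finset.sum_le_sum fun i _ => h1 i
  have hshift : ∀ c : ZMod N, ∑ i : ZMod N, ℓ (i + c) = ∑ i : ZMod N, ℓ i := fun c =>
    Fintype.sum_equiv (Equiv.addRight c) _ _ fun i => rfl
  have hswap : ∑ i : ZMod N, ∑ j ∈ (Finset.Icc (-(d : ℤ)) (d : ℤ)).erase 0, ℓ (i + (j : ZMod N))
      = (2 * d : ℝ) * ∑ i : ZMod N, ℓ i := by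
    rw [Finset.sum_comm]
    have hcard : ((Finset.Icc (-(d : ℤ)) (d : ℤ)).erase 0).card = 2 * d := by
      rw [Finset.card_erase_of_mem (by simp [hd.le]), Int.card_Icc]
      simp [two_mul]
      omega
    calc ∑ j ∈ (Finset.Icc (-(d : ℤ)) (d : ℤ)).erase 0, ∑ i : ZMod N, ℓ (i + (j : ZMod N))
        = ∑ j ∈ (Finset.Icc (-(d : ℤ)) (d : ℤ)).erase 0, ∑ i : ZMod N, ℓ i := by
          exact Finset.sum_congr rfl fun j _ => hshift _
      _ = (2 * d : ℝ) * ∑ i : ZMod N, ℓ i := by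
          rw [Finset.sum_const, hcard, nsmul_eq_mul]; push_cast; ring
  have hLHS : ∑ i : ZMod N, ((N : ℝ) - m i) = (N : ℝ) * ((N : ℝ) - r) := by
    rw [Finset.sum_sub_distrib, h2, Finset.sum_const, Finset.card_univ, ZMod.card,
      nsmul_eq_mul]
    ring
  rw [hswap, hLHS] at hsum
  have h2d : (0 : ℝ) < 2 * d := by positivity
  rw [div_le_iff₀ h2d]
  linarith
end

section
/- Let N ≥ 1, 1 ≤ r ≤ N, and let dist(a,b) denote the cyclic distance min((a−b) mod N, (b−a) mod N) on ZMod N. For every pair i, j ∈ ZMod N, there exists t ∈ {0, 1, ..., r−1} such that dist(i, j − t) ≤ ⌈(N − r)/2⌉. -/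
/-- Every node `i` is within cyclic distance `⌈(N−r)/2⌉` of some node caching
file `j` under cyclic placement (the caching nodes of `j` are `j, j−1, ...,
j−(r−1)`). -/
theorem cyclic_distance_to_cache (N r : ℕ) [NeZero N] (hr : 1 ≤ r) (hrN : r ≤ N) :
    ∀ i j : ZMod N, ∃ t : ℕ, t < r ∧
      min ((i - (j - (t : ZMod N))).val) ((j - (t : ZMod N) - i).val) ≤ (N - r + 1) / 2 := by
  intro i j
  set d := (j - i).val with hd
  have hdN : d < N := ZMod.val_lt _
  have hcast : (d : ZMod N) = j - i := by rw [hd, ZMod.natCast_val, ZMod.cast_id]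
  by_cases hcase : d < r
  · refine ⟨d, hcase, le_trans (min_le_right _ _) ?_⟩
    have hz : j - (d : ZMod N) - i = 0 := by rw [hcast]; ring
    simp [hz]
  · push_neg at hcase
    by_cases h2 : d - (r - 1) ≤ (N - r + 1) / 2
    · refine ⟨r - 1, Nat.sub_lt hr Nat.one_pos, le_trans (min_le_right _ _) ?_⟩
      have ht : r - 1 ≤ d := le_trans (Nat.sub_le _ _) hcase
      have : j - ((r-1 : ℕ) : ZMod N) - i = ((d - (r-1) : ℕ) : ZMod N) := by
        rw [sub_right_comm, ← hcast]
        push_cast [ht]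
        ring
      rw [this, ZMod.val_natCast_of_lt (lt_of_le_of_lt (Nat.sub_le _ _) hdN)]
      exact h2
    · push_neg at h2
      refine ⟨0, hr, le_trans (min_le_left _ _) ?_⟩
      have hdne : (d : ZMod N) ≠ 0 := by
        have : d ≠ 0 := by omega
        intro h
        exact this (by simpa [ZMod.val_natCast_of_lt hdN] using congrArg ZMod.val h)
      have heq : i - (j - ((0:ℕ) : ZMod N)) = -((d : ℕ) : ZMod N) := by
        rw [hcast]; push_cast; ring
      rw [heq, ZMod.neg_val, if_neg hdne, ZMod.val_natCast_of_lt hdN]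
      -- need N - d ≤ (N - r + 1)/2 knowing d - (r-1) > (N-r+1)/2
      omega
end

section
/- Let N ≥ 1, r ≥ 1, d ≥ 1, k ≥ 2, and let G be an abelian group with V : ZMod N → G. Suppose node i knows V on the cyclic interval A = {i − d(k−1), ..., i + d(k−1) + r − 1} (mod N), and receives from each neighbor j ∈ {i−d, ..., i−1} the sum V(j − d(k−1)) + V(j + d(k−1) + r − 1) and from each j ∈ {i+1, ..., i+d} the sum V(j − d(k−1)) + V(j + d(k−1) + r − 1). If 2dk + r ≤ N, then V is uniquely determined on the larger interval {i − dk, ..., i + dk + r − 1}. -/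
/-- Round-`k` decoding uniqueness for all-gather: two functions agreeing on the
window `{i−d(k−1), ..., i+d(k−1)+r−1}` and producing the same `2d` coded sums
`V(p − d(k−1)) + V(p + d(k−1) + r − 1)` for neighbors `p ∈ {i−d,...,i−1} ∪
{i+1,...,i+d}` agree on the enlarged window `{i−dk, ..., i+dk+r−1}`. -/
theorem allgather_round_k_decoding (G : Type*) [AddCommGroup G]
    (N r d k : ℕ) [NeZero N] (hr : 1 ≤ r) (hd : 1 ≤ d) (hk : 2 ≤ k)
    (hN : 2 * d * k + r ≤ N)
    (i : ZMod N) (V V' : ZMod N → G)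
    (hwin : ∀ t : ℤ, -((d : ℤ) * (k - 1)) ≤ t → t ≤ (d : ℤ) * (k - 1) + r - 1 →
      V (i + (t : ZMod N)) = V' (i + (t : ZMod N)))
    (hsum : ∀ j : ℤ, 1 ≤ j → j ≤ (d : ℤ) →
      (V ((i - (j : ZMod N)) - (((d : ℤ) * (k - 1) : ℤ) : ZMod N))
          + V ((i - (j : ZMod N)) + (((d : ℤ) * (k - 1) + r - 1 : ℤ) : ZMod N))
        = V' ((i - (j : ZMod N)) - (((d : ℤ) * (k - 1) : ℤ) : ZMod N))
          + V' ((i - (j : ZMod N)) + (((d : ℤ) * (k - 1) + r - 1 : ℤ) : ZMod N))) ∧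
      (V ((i + (j : ZMod N)) - (((d : ℤ) * (k - 1) : ℤ) : ZMod N))
          + V ((i + (j : ZMod N)) + (((d : ℤ) * (k - 1) + r - 1 : ℤ) : ZMod N))
        = V' ((i + (j : ZMod N)) - (((d : ℤ) * (k - 1) : ℤ) : ZMod N))
          + V' ((i + (j : ZMod N)) + (((d : ℤ) * (k - 1) + r - 1 : ℤ) : ZMod N)))) :
    ∀ t : ℤ, -((d : ℤ) * k) ≤ t → t ≤ (d : ℤ) * k + r - 1 →
      V (i + (t : ZMod N)) = V' (i + (t : ZMod N)) := by
  intro t ht1 ht2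
  have hrz : (1:ℤ) ≤ (r:ℤ) := by exact_mod_cast hr
  have hdz : (1:ℤ) ≤ (d:ℤ) := by exact_mod_cast hd
  have hkz : (2:ℤ) ≤ (k:ℤ) := by exact_mod_cast hk
  set m : ℤ := (d:ℤ) * ((k:ℤ) - 1) with hm
  have hdk : (d:ℤ) * (k:ℤ) = m + d := by ring
  have hm0 : (d:ℤ) ≤ m := by nlinarith
  by_cases h1 : -m ≤ t
  · by_cases h2 : t ≤ m + (r:ℤ) - 1
    · exact hwin t h1 h2
    · push_neg at h2
      set j : ℤ := t - (m + r - 1) with hj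
      have hj1 : 1 ≤ j := by omega
      have hj2 : j ≤ (d:ℤ) := by omega
      obtain ⟨_, hR⟩ := hsum j hj1 hj2
      have e1 : (i + (j:ZMod N)) - ((m : ℤ) : ZMod N)
          = i + ((j - m : ℤ) : ZMod N) := by push_cast; ring
      have e2 : (i + (j:ZMod N)) + ((m + (r:ℤ) - 1 : ℤ) : ZMod N)
          = i + ((t : ℤ) : ZMod N) := by
        have : t = j + m + (r:ℤ) - 1 := by omega
        rw [this]; push_cast; ring
      have hw : V (i + ((j - m : ℤ) : ZMod N)) = V' (i + ((j - m : ℤ) : ZMod N)) :=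
        hwin _ (by omega) (by omega)
      rw [e1, e2, hw] at hR
      exact add_left_cancel hR
  · push_neg at h1
    set j : ℤ := -t - m with hj
    have hj1 : 1 ≤ j := by omega
    have hj2 : j ≤ (d:ℤ) := by omega
    obtain ⟨hL, _⟩ := hsum j hj1 hj2
    have e1 : (i - (j:ZMod N)) - ((m : ℤ) : ZMod N)
        = i + ((t : ℤ) : ZMod N) := by
      have : t = -j - m := by omega
      rw [this]; push_cast; ring
    have e2 : (i - (j:ZMod N)) + ((m + (r:ℤ) - 1 : ℤ) : ZMod N)
        = i + ((m + (r:ℤ) - 1 - j : ℤ) : ZMod N) := by push_cast; ring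
    have hw : V (i + ((m + (r:ℤ) - 1 - j : ℤ) : ZMod N))
        = V' (i + ((m + (r:ℤ) - 1 - j : ℤ) : ZMod N)) :=
      hwin _ (by omega) (by omega)
    rw [e1, e2, hw] at hL
    exact add_right_cancel hL
end
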